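/- Let n ≥ 1 and let k: ℝ × ℝ²ⁿ → ℝ be smooth. Let x_e ∈ ℝ²ⁿ satisfy D_x k(t, x_e) = 0 for all t ∈ ℝ. Set H(t,x) := k(t,x) − k(t,x_e) and let M(t) be the 2n×2n matrix with entries (1/2) ∂²H/∂x_i∂x_j(t,x_e). Assume there exist t⁰ ∈ ℝ, λ > 0, c > 0 and r₀ > 0 such that for all t ≥ t⁰: (i) vᵀ M(t) v > λ‖v‖² for all v ∈ ℝ²ⁿ∖{0}; (ii') |D_x^α H(t,x)| ≤ 6c for every multi-index α with 1 ≤ |α| ≤ 3 and every x with ‖x − x_e‖ < r₀; and (iii) ∂H/∂t(t,x) ≤ 0 for every x with ‖x − x_e‖ < r₀. Then x_e is uniformly stable from t⁰: for every ε > 0 there exists δ > 0, independent of t₀, such that for every t₀ ≥ t⁰, every solution (q,p): [t₀,∞) → ℝ²ⁿ of the Hamilton equations of k with ‖(q,p)(t₀) − x_e‖ < δ satisfies ‖(q,p)(t) − x_e‖ < ε for all t ≥ t₀. -/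

import Mathlib

open scoped BigOperators

/-- First partial derivative of `f` at `x` in the `i`-th coordinate direction. -/
noncomputable def pd {m : ℕ} (f : EuclideanSpace ℝ (Fin m) → ℝ)
    (x : EuclideanSpace ℝ (Fin m)) (i : Fin m) : ℝ :=
  fderiv ℝ f x (EuclideanSpace.single i 1)

/-- Second partial derivative. -/
noncomputable def pd2 {m : ℕ} (f : EuclideanSpace ℝ (Fin m) → ℝ)
    (x : EuclideanSpace ℝ (Fin m)) (i j : Fin m) : ℝ :=
  pd (fun y => pd f y j) x i

/-- Third partial derivative. -/
noncomputable def pd3 {m : ℕ} (f : EuclideanSpace ℝ (Fin m) → ℝ)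
    (x : EuclideanSpace ℝ (Fin m)) (i j k : Fin m) : ℝ :=
  pd (fun y => pd2 f y j k) x i

/-- The index of the coordinate `q_i` in `ℝ^{2n}` with coordinates `(q, p)`. -/
def qIdx (n : ℕ) (i : Fin n) : Fin (2 * n) :=
  ⟨(i : ℕ), lt_of_lt_of_le i.isLt (by omega)⟩

/-- The index of the coordinate `p_i` in `ℝ^{2n}` with coordinates `(q, p)`. -/
def pIdx (n : ℕ) (i : Fin n) : Fin (2 * n) :=
  ⟨n + (i : ℕ), lt_of_lt_of_le (Nat.add_lt_add_left i.isLt n) (by omega)⟩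

/-- The Hamiltonian vector field of `k : ℝ × ℝ^{2n} → ℝ` in canonical coordinates
`(q₁, …, q_n, p₁, …, p_n)`: `dq_i/dt = ∂k/∂p_i`, `dp_i/dt = −∂k/∂q_i`. -/
noncomputable def hamVF (n : ℕ) (k : ℝ × EuclideanSpace ℝ (Fin (2 * n)) → ℝ)
    (t : ℝ) (x : EuclideanSpace ℝ (Fin (2 * n))) : EuclideanSpace ℝ (Fin (2 * n)) :=
  (WithLp.equiv 2 (Fin (2 * n) → ℝ)).symm fun i =>
    if h : (i : ℕ) < n then pd (fun y => k (t, y)) x (pIdx n ⟨(i : ℕ), h⟩)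
    else - pd (fun y => k (t, y)) x ⟨(i : ℕ) - n, lt_of_le_of_lt (Nat.sub_le _ _) i.isLt⟩


lemma sum_single_eq {m : ℕ} (v : EuclideanSpace ℝ (Fin m)) :
    ∑ i, v i • EuclideanSpace.single i (1:ℝ) = v := by
  apply PiLp.ext
  intro j
  have : (∑ i : Fin m, v i • EuclideanSpace.single i (1:ℝ)) j
      = ∑ i : Fin m, (v i • EuclideanSpace.single i (1:ℝ)) j :=
    by rw [WithLp.ofLp_sum]; exact Finset.sum_apply j Finset.univ _
  rw [this]
  simp [EuclideanSpace.single_apply]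

lemma clm_apply_eq_sum {m : ℕ} (L : EuclideanSpace ℝ (Fin m) →L[ℝ] ℝ)
    (v : EuclideanSpace ℝ (Fin m)) :
    L v = ∑ i, v i * L (EuclideanSpace.single i 1) := by
  conv_lhs => rw [← sum_single_eq v]
  rw [map_sum]
  simp [smul_eq_mul]

lemma fderiv_apply_eq_sum {m : ℕ} {f : EuclideanSpace ℝ (Fin m) → ℝ}
    {x v : EuclideanSpace ℝ (Fin m)} :
    fderiv ℝ f x v = ∑ i, v i * pd f x i := clm_apply_eq_sum _ v

lemma contDiff_pd {m : ℕ} {f : EuclideanSpace ℝ (Fin m) → ℝ} (hf : ContDiff ℝ (⊤ : ℕ∞) f) (i : Fin m) :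
    ContDiff ℝ (⊤ : ℕ∞) (fun y => pd f y i) := by
  have h1 : ContDiff ℝ (⊤ : ℕ∞) (fderiv ℝ f) := hf.fderiv_right (by simp)
  exact (ContinuousLinearMap.apply ℝ ℝ (EuclideanSpace.single i 1)).contDiff.comp h1

lemma hasDerivAt_line {m : ℕ} {f : EuclideanSpace ℝ (Fin m) → ℝ} (hf : ContDiff ℝ (⊤ : ℕ∞) f)
    (x0 v : EuclideanSpace ℝ (Fin m)) (s : ℝ) :
    HasDerivAt (fun s : ℝ => f (x0 + s • v)) (∑ i, v i * pd f (x0 + s • v) i) s := by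
  have hline : HasDerivAt (fun s : ℝ => x0 + s • v) v s := by
    simpa using ((hasDerivAt_id s).smul_const v).const_add x0
  have hfd : HasFDerivAt f (fderiv ℝ f (x0 + s • v)) (x0 + s • v) :=
    (hf.differentiable (by simp) (x0 + s • v)).hasFDerivAt
  have := hfd.comp_hasDerivAt s hline
  rw [fderiv_apply_eq_sum] at this
  exact this

lemma hasDerivAt_line2 {m : ℕ} {f : EuclideanSpace ℝ (Fin m) → ℝ} (hf : ContDiff ℝ (⊤ : ℕ∞) f)
    (x0 v : EuclideanSpace ℝ (Fin m)) (s : ℝ) :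
    HasDerivAt (fun s : ℝ => ∑ i, v i * pd f (x0 + s • v) i)
      (∑ i, v i * ∑ j, v j * pd2 f (x0 + s • v) j i) s := by
  apply HasDerivAt.fun_sum
  intro i _
  exact (hasDerivAt_line (contDiff_pd hf i) x0 v s).const_mul (v i)

lemma hasDerivAt_line3 {m : ℕ} {f : EuclideanSpace ℝ (Fin m) → ℝ} (hf : ContDiff ℝ (⊤ : ℕ∞) f)
    (x0 v : EuclideanSpace ℝ (Fin m)) (s : ℝ) :
    HasDerivAt (fun s : ℝ => ∑ i, v i * ∑ j, v j * pd2 f (x0 + s • v) j i)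
      (∑ i, v i * ∑ j, v j * ∑ l, v l * pd3 f (x0 + s • v) l j i) s := by
  apply HasDerivAt.fun_sum
  intro i _
  apply HasDerivAt.const_mul
  apply HasDerivAt.fun_sum
  intro j _
  exact (hasDerivAt_line (contDiff_pd (contDiff_pd hf i) j) x0 v s).const_mul (v j)

lemma abs_apply_le_norm {m : ℕ} (v : EuclideanSpace ℝ (Fin m)) (i : Fin m) : |v i| ≤ ‖v‖ := by
  have h2 : |v i| = Real.sqrt (|v i| ^ 2) := (Real.sqrt_sq (abs_nonneg _)).symm
  rw [EuclideanSpace.norm_eq, h2]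
  apply Real.sqrt_le_sqrt
  have h3 : |v i| ^ 2 = ‖v i‖ ^ 2 := by rw [Real.norm_eq_abs]
  rw [h3]
  exact Finset.single_le_sum (f := fun j => ‖v j‖ ^ 2) (fun j _ => by positivity) (Finset.mem_univ i)

lemma sum_mul_bound {m : ℕ} (v : EuclideanSpace ℝ (Fin m)) (w : Fin m → ℝ) (B : ℝ)
    (hw : ∀ i, |w i| ≤ B) : |∑ i, v i * w i| ≤ m * (‖v‖ * B) := by
  calc |∑ i, v i * w i| ≤ ∑ i, |v i * w i| := Finset.abs_sum_le_sum_abs _ _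
    _ ≤ ∑ _i : Fin m, ‖v‖ * B := by
        apply Finset.sum_le_sum
        intro i _
        rw [abs_mul]
        exact mul_le_mul (abs_apply_le_norm v i) (hw i) (abs_nonneg _) (norm_nonneg _)
    _ = m * (‖v‖ * B) := by simp [Finset.sum_const, Finset.card_univ]


lemma monoOn_Icc (u u' : ℝ → ℝ) (hu : ∀ s ∈ Set.Icc (0:ℝ) 1, HasDerivAt u (u' s) s)
    (h' : ∀ s ∈ Set.Icc (0:ℝ) 1, 0 ≤ u' s) : MonotoneOn u (Set.Icc (0:ℝ) 1) := by
  apply monotoneOn_of_deriv_nonneg (convex_Icc 0 1)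
  · intro s hs
    exact (hu s hs).continuousAt.continuousWithinAt
  · intro s hs
    rw [interior_Icc] at hs
    exact (hu s (Set.mem_Icc_of_Ioo hs)).differentiableAt.differentiableWithinAt
  · intro s hs
    rw [interior_Icc] at hs
    rw [(hu s (Set.mem_Icc_of_Ioo hs)).deriv]
    exact h' s (Set.mem_Icc_of_Ioo hs)

lemma quad_lower (g g1 g2 : ℝ → ℝ)
    (hg : ∀ s ∈ Set.Icc (0:ℝ) 1, HasDerivAt g (g1 s) s)
    (hg1 : ∀ s ∈ Set.Icc (0:ℝ) 1, HasDerivAt g1 (g2 s) s)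
    (h0 : g 0 = 0) (h1 : g1 0 = 0) (m : ℝ)
    (hm : ∀ s ∈ Set.Icc (0:ℝ) 1, m ≤ g2 s) : m / 2 ≤ g 1 := by
  have step1 : ∀ s ∈ Set.Icc (0:ℝ) 1, m * s ≤ g1 s := by
    have := monoOn_Icc (fun s => g1 s - m * s) (fun s => g2 s - m)
      (fun s hs => (hg1 s hs).sub ((hasDerivAt_id s).const_mul m |>.congr_deriv (by ring)))
      (fun s hs => by linarith [hm s hs])
    intro s hs
    have h := this (Set.left_mem_Icc.2 one_pos.le) hs hs.1
    simp only [h1] at h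
    nlinarith [h]
  have step2 := monoOn_Icc (fun s => g s - m * s ^ 2 / 2) (fun s => g1 s - m * s)
    (fun s hs => by
      have hp : HasDerivAt (fun s : ℝ => m * s ^ 2 / 2) (m * s) s := by
        have := ((hasDerivAt_pow 2 s).const_mul m).div_const 2
        simpa using this.congr_deriv (by ring)
      exact (hg s hs).sub hp)
    (fun s hs => by linarith [step1 s hs])
  have h := step2 (Set.left_mem_Icc.2 one_pos.le) (Set.right_mem_Icc.2 one_pos.le) one_pos.le
  dsimp only at h
  simp only [h0] at h
  nlinarith [h]

lemma quad_upper (g g1 g2 : ℝ → ℝ)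
    (hg : ∀ s ∈ Set.Icc (0:ℝ) 1, HasDerivAt g (g1 s) s)
    (hg1 : ∀ s ∈ Set.Icc (0:ℝ) 1, HasDerivAt g1 (g2 s) s)
    (h0 : g 0 = 0) (h1 : g1 0 = 0) (M : ℝ)
    (hm : ∀ s ∈ Set.Icc (0:ℝ) 1, g2 s ≤ M) : g 1 ≤ M / 2 := by
  have := quad_lower (fun s => - g s) (fun s => - g1 s) (fun s => - g2 s)
    (fun s hs => (hg s hs).neg) (fun s hs => (hg1 s hs).neg)
    (by simp [h0]) (by simp [h1]) (-M) (fun s hs => by linarith [hm s hs])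
  linarith

lemma sum_fin_split (n : ℕ) (f : Fin (2 * n) → ℝ) :
    ∑ i, f i = ∑ i : Fin n, f ⟨(i:ℕ), by omega⟩ + ∑ i : Fin n, f ⟨n + (i:ℕ), by omega⟩ := by
  rw [← (finSumFinEquiv.trans (finCongr (two_mul n).symm)).sum_comp f, Fintype.sum_sum_type]
  congr 1

lemma key_upper {m : ℕ} (f : EuclideanSpace ℝ (Fin m) → ℝ) (hf : ContDiff ℝ (⊤ : ℕ∞) f)
    (xe v : EuclideanSpace ℝ (Fin m)) (c r0 : ℝ)
    (hf0 : f xe = 0) (hcrit : fderiv ℝ f xe = 0)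
    (h2b : ∀ x : EuclideanSpace ℝ (Fin m), ‖x - xe‖ < r0 → ∀ i j, |pd2 f x i j| ≤ 6 * c)
    (hv : ‖v‖ < r0) :
    f (xe + v) ≤ 3 * c * m ^ 2 * ‖v‖ ^ 2 := by
  have hseg : ∀ s ∈ Set.Icc (0:ℝ) 1, ‖(xe + s • v) - xe‖ < r0 := by
    intro s hs
    rw [add_sub_cancel_left, norm_smul]
    calc ‖s‖ * ‖v‖ ≤ 1 * ‖v‖ := by
          apply mul_le_mul_of_nonneg_right _ (norm_nonneg _)
          rw [Real.norm_eq_abs, abs_of_nonneg hs.1]; exact hs.2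
      _ = ‖v‖ := one_mul _
      _ < r0 := hv
  have hg := fun (s:ℝ) => hasDerivAt_line hf xe v s
  have hg1 := fun (s:ℝ) => hasDerivAt_line2 hf xe v s
  have h0 : f (xe + (0:ℝ) • v) = 0 := by simp [hf0]
  have h1 : (∑ i, v i * pd f (xe + (0:ℝ) • v) i) = 0 := by
    simp only [zero_smul, add_zero]
    apply Finset.sum_eq_zero
    intro i _
    simp [pd, hcrit]
  have hbound : ∀ s ∈ Set.Icc (0:ℝ) 1,
      (∑ i, v i * ∑ j, v j * pd2 f (xe + s • v) j i) ≤ 6 * c * m ^ 2 * ‖v‖ ^ 2 := by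
    intro s hs
    have hb := sum_mul_bound v (fun i => ∑ j, v j * pd2 f (xe + s • v) j i)
      (m * (‖v‖ * (6 * c))) (fun i => sum_mul_bound v _ _ (fun j => h2b _ (hseg s hs) j i))
    have := (abs_le.mp hb).2
    calc (∑ i, v i * ∑ j, v j * pd2 f (xe + s • v) j i)
        ≤ m * (‖v‖ * (m * (‖v‖ * (6 * c)))) := this
      _ = 6 * c * m ^ 2 * ‖v‖ ^ 2 := by ring
  have := quad_upper (fun s => f (xe + s • v)) _ _ (fun s _ => hg s) (fun s _ => hg1 s)
    h0 h1 (6 * c * m ^ 2 * ‖v‖ ^ 2) hbound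
  simp only [one_smul] at this
  linarith

lemma key_lower {m : ℕ} (f : EuclideanSpace ℝ (Fin m) → ℝ) (hf : ContDiff ℝ (⊤ : ℕ∞) f)
    (xe v : EuclideanSpace ℝ (Fin m)) (lam c r0 : ℝ)
    (hf0 : f xe = 0) (hcrit : fderiv ℝ f xe = 0)
    (h3b : ∀ x : EuclideanSpace ℝ (Fin m), ‖x - xe‖ < r0 → ∀ i j l, |pd3 f x i j l| ≤ 6 * c)
    (hQ : 2 * (lam * ‖v‖ ^ 2) ≤ ∑ i, v i * ∑ j, v j * pd2 f xe j i)
    (hv : ‖v‖ < r0) (hsmall : 6 * c * m ^ 3 * ‖v‖ ^ 3 ≤ lam * ‖v‖ ^ 2) :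
    lam * ‖v‖ ^ 2 / 2 ≤ f (xe + v) := by
  have hseg : ∀ s ∈ Set.Icc (0:ℝ) 1, ‖(xe + s • v) - xe‖ < r0 := by
    intro s hs
    rw [add_sub_cancel_left, norm_smul]
    calc ‖s‖ * ‖v‖ ≤ 1 * ‖v‖ := by
          apply mul_le_mul_of_nonneg_right _ (norm_nonneg _)
          rw [Real.norm_eq_abs, abs_of_nonneg hs.1]; exact hs.2
      _ = ‖v‖ := one_mul _
      _ < r0 := hv
  have hg := fun (s:ℝ) => hasDerivAt_line hf xe v s
  have hg1 := fun (s:ℝ) => hasDerivAt_line2 hf xe v s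
  have hg2 := fun (s:ℝ) => hasDerivAt_line3 hf xe v s
  have h0 : f (xe + (0:ℝ) • v) = 0 := by simp [hf0]
  have h1 : (∑ i, v i * pd f (xe + (0:ℝ) • v) i) = 0 := by
    simp only [zero_smul, add_zero]
    exact Finset.sum_eq_zero fun i _ => by simp [pd, hcrit]
  -- bound on third derivative sum
  have hg3bound : ∀ s ∈ Set.Icc (0:ℝ) 1,
      |∑ i, v i * ∑ j, v j * ∑ l, v l * pd3 f (xe + s • v) l j i| ≤ 6 * c * m ^ 3 * ‖v‖ ^ 3 := by
    intro s hs
    have hb := sum_mul_bound v (fun i => ∑ j, v j * ∑ l, v l * pd3 f (xe + s • v) l j i)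
      (m * (‖v‖ * (m * (‖v‖ * (6 * c)))))
      (fun i => sum_mul_bound v _ _
        (fun j => sum_mul_bound v _ _ (fun l => h3b _ (hseg s hs) l j i)))
    calc |∑ i, v i * ∑ j, v j * ∑ l, v l * pd3 f (xe + s • v) l j i|
        ≤ m * (‖v‖ * (m * (‖v‖ * (m * (‖v‖ * (6 * c)))))) := hb
      _ = 6 * c * m ^ 3 * ‖v‖ ^ 3 := by ring
  -- lower bound on g2 along the segment
  have hC : (0:ℝ) ≤ 6 * c * m ^ 3 * ‖v‖ ^ 3 :=
    le_trans (abs_nonneg _) (hg3bound 0 (Set.left_mem_Icc.2 one_pos.le))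
  set C := 6 * c * m ^ 3 * ‖v‖ ^ 3 with hCdef
  have hmono := monoOn_Icc
    (fun s => (∑ i, v i * ∑ j, v j * pd2 f (xe + s • v) j i) + C * s)
    (fun s => (∑ i, v i * ∑ j, v j * ∑ l, v l * pd3 f (xe + s • v) l j i) + C)
    (fun s _ => (hg2 s).add (((hasDerivAt_id s).const_mul C).congr_deriv (by ring)))
    (fun s hs => by
      have := (abs_le.mp (hg3bound s hs)).1
      dsimp only
      linarith)
  have hg2low : ∀ s ∈ Set.Icc (0:ℝ) 1,
      lam * ‖v‖ ^ 2 ≤ ∑ i, v i * ∑ j, v j * pd2 f (xe + s • v) j i := by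
    intro s hs
    have h := hmono (Set.left_mem_Icc.2 one_pos.le) hs hs.1
    dsimp only at h
    have hs1 : C * s ≤ C := by nlinarith [hs.1, hs.2]
    have h00 : (xe + (0:ℝ) • v) = xe := by simp
    rw [h00] at h
    -- h : g2 0 + 0 ≤ g2 s + C * s
    have := hQ
    nlinarith
  have := quad_lower (fun s => f (xe + s • v)) _ _ (fun s _ => hg s) (fun s _ => hg1 s)
    h0 h1 (lam * ‖v‖ ^ 2) hg2low
  simp only [one_smul] at this
  linarith


lemma hamVF_dot (n : ℕ) (k : ℝ × EuclideanSpace ℝ (Fin (2 * n)) → ℝ) (t : ℝ)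
    (x : EuclideanSpace ℝ (Fin (2 * n))) :
    ∑ i, hamVF n k t x i * pd (fun y => k (t, y)) x i = 0 := by
  rw [sum_fin_split]
  have e1 : ∀ i : Fin n, hamVF n k t x ⟨(i:ℕ), by omega⟩ =
      pd (fun y => k (t, y)) x (pIdx n i) := by
    intro i
    simp only [hamVF, WithLp.equiv_symm_apply, PiLp.toLp_apply]
    rw [dif_pos i.isLt]
  have e2 : ∀ i : Fin n, hamVF n k t x ⟨n + (i:ℕ), by omega⟩ =
      - pd (fun y => k (t, y)) x ⟨(i:ℕ), by omega⟩ := by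
    intro i
    simp only [hamVF, WithLp.equiv_symm_apply, PiLp.toLp_apply]
    rw [dif_neg (Nat.not_lt.mpr (Nat.le_add_right n (i:ℕ)))]
    congr 1
    congr 1
    apply Fin.ext
    show n + (i:ℕ) - n = (i:ℕ)
    omega
  have e3 : ∀ i : Fin n, (⟨n + (i:ℕ), by omega⟩ : Fin (2*n)) = pIdx n i := fun i => rfl
  calc (∑ i : Fin n, hamVF n k t x ⟨(i:ℕ), by omega⟩ * pd (fun y => k (t, y)) x ⟨(i:ℕ), by omega⟩)
        + ∑ i : Fin n, hamVF n k t x ⟨n + (i:ℕ), by omega⟩ * pd (fun y => k (t, y)) x ⟨n + (i:ℕ), by omega⟩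
      = (∑ i : Fin n, pd (fun y => k (t, y)) x (pIdx n i) * pd (fun y => k (t, y)) x ⟨(i:ℕ), by omega⟩)
        + ∑ i : Fin n, (- pd (fun y => k (t, y)) x ⟨(i:ℕ), by omega⟩) * pd (fun y => k (t, y)) x (pIdx n i) := by
        congr 1
        · exact Finset.sum_congr rfl fun i _ => by rw [e1]
        · exact Finset.sum_congr rfl fun i _ => by rw [e2, e3]
    _ = 0 := by
        rw [← Finset.sum_add_distrib]
        apply Finset.sum_eq_zero
        intro i _
        ring


set_option maxHeartbeats 1000000 in
/-- Coordinate form of Corollary 8.4: uniform stability from `t⁰` of an equilibrium point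
`x_e` of the Hamilton equations of `k`, when all space-derivatives of
`H(t,x) = k(t,x) − k(t,x_e)` of orders `1 ≤ |α| ≤ 3` are uniformly bounded by `6c`
near `x_e`, the Hessian at `x_e` is uniformly positive definite, and `∂H/∂t ≤ 0`. -/
theorem uniform_stability_of_equilibrium
    (n : ℕ) (hn : 1 ≤ n)
    (k : ℝ × EuclideanSpace ℝ (Fin (2 * n)) → ℝ) (hk : ContDiff ℝ (⊤ : ℕ∞) k)
    (xe : EuclideanSpace ℝ (Fin (2 * n)))
    (hcrit : ∀ t : ℝ, fderiv ℝ (fun x => k (t, x)) xe = 0)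
    (H : ℝ × EuclideanSpace ℝ (Fin (2 * n)) → ℝ)
    (hHdef : ∀ t x, H (t, x) = k (t, x) - k (t, xe))
    (M : ℝ → Matrix (Fin (2 * n)) (Fin (2 * n)) ℝ)
    (hM : ∀ t i j, M t i j = (1 / 2) * pd2 (fun x => H (t, x)) xe i j)
    (t0 lam c r0 : ℝ) (hlam : 0 < lam) (hc : 0 < c) (hr0 : 0 < r0)
    (hlow : ∀ t ≥ t0, ∀ v : EuclideanSpace ℝ (Fin (2 * n)), v ≠ 0 →
      lam * ‖v‖ ^ 2 < ∑ i, ∑ j, v i * M t i j * v j)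
    (h1 : ∀ t ≥ t0, ∀ x : EuclideanSpace ℝ (Fin (2 * n)), ‖x - xe‖ < r0 → ∀ i,
      |pd (fun y => H (t, y)) x i| ≤ 6 * c)
    (h2 : ∀ t ≥ t0, ∀ x : EuclideanSpace ℝ (Fin (2 * n)), ‖x - xe‖ < r0 → ∀ i j,
      |pd2 (fun y => H (t, y)) x i j| ≤ 6 * c)
    (h3 : ∀ t ≥ t0, ∀ x : EuclideanSpace ℝ (Fin (2 * n)), ‖x - xe‖ < r0 → ∀ i j l,
      |pd3 (fun y => H (t, y)) x i j l| ≤ 6 * c)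
    (hdec : ∀ t ≥ t0, ∀ x : EuclideanSpace ℝ (Fin (2 * n)), ‖x - xe‖ < r0 →
      deriv (fun s => H (s, x)) t ≤ 0) :
    ∀ ε > 0, ∃ δ > 0, ∀ t1 ≥ t0,
      ∀ γ : ℝ → EuclideanSpace ℝ (Fin (2 * n)),
        (∀ t ∈ Set.Ici t1, HasDerivWithinAt γ (hamVF n k t (γ t)) (Set.Ici t1) t) →
        ‖γ t1 - xe‖ < δ → ∀ t ≥ t1, ‖γ t - xe‖ < ε := by
  intro eps heps
  have hHeq : H = fun p => k p - k (p.1, xe) := funext fun p => hHdef p.1 p.2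
  have hH : ContDiff ℝ (⊤ : ℕ∞) H := by
    rw [hHeq]; exact hk.sub (hk.comp (contDiff_fst.prodMk contDiff_const))
  have hft : ∀ t : ℝ, ContDiff ℝ (⊤ : ℕ∞) (fun x => H (t, x)) := fun t =>
    hH.comp (contDiff_const.prodMk contDiff_id)
  have hft0 : ∀ t : ℝ, H (t, xe) = 0 := fun t => by rw [hHdef]; ring
  have hftcrit : ∀ t : ℝ, fderiv ℝ (fun x => H (t, x)) xe = 0 := by
    intro t
    have he : (fun x => H (t, x)) = fun x => k (t, x) - k (t, xe) := funext fun x => hHdef t x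
    rw [he, fderiv_sub_const, hcrit]
  set K := 3 * c * ((2 * n : ℕ) : ℝ) ^ 2 with hKdef
  set C3 := 6 * c * ((2 * n : ℕ) : ℝ) ^ 3 with hC3def
  have hnpos : (0:ℝ) < ((2 * n : ℕ) : ℝ) := by
    have : 0 < 2 * n := by omega
    exact_mod_cast this
  have hK : 0 < K := by positivity
  have hC3 : 0 < C3 := by positivity
  set r1 := min (lam / C3) (r0 / 2) with hr1def
  have hr1 : 0 < r1 := lt_min (div_pos hlam hC3) (by linarith)
  have hr1a : r1 ≤ lam / C3 := min_le_left _ _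
  have hr1b : r1 ≤ r0 / 2 := min_le_right _ _
  set eps' := min eps r1 with heps'def
  have heps' : 0 < eps' := lt_min heps hr1
  have heps'r1 : eps' ≤ r1 := min_le_right _ _
  set del := min (eps' / 2) (eps' / 2 * Real.sqrt (lam / (4 * K))) with hdeldef
  have hdel : 0 < del := by
    apply lt_min (by linarith)
    have : 0 < Real.sqrt (lam / (4 * K)) := Real.sqrt_pos.2 (by positivity)
    positivity
  refine ⟨del, hdel, ?_⟩
  intro t1 ht1 γ hγ hinit t ht
  have hγcont : ContinuousOn γ (Set.Ici t1) := fun u hu => (hγ u hu).continuousWithinAt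
  have claim : ∀ s ≥ t1, ‖γ s - xe‖ < eps' := by
    by_contra hcon
    push_neg at hcon
    obtain ⟨s, hs1, hs2⟩ := hcon
    have hnormcont : ContinuousOn (fun u => ‖γ u - xe‖) (Set.Ici t1) :=
      (hγcont.sub continuousOn_const).norm
    set S := Set.Ici t1 ∩ (fun u => ‖γ u - xe‖) ⁻¹' Set.Ici eps' with hSdef
    have hScl : IsClosed S :=
      hnormcont.preimage_isClosed_of_isClosed isClosed_Ici isClosed_Ici
    have hSne : S.Nonempty := ⟨s, hs1, hs2⟩
    have hSbdd : BddBelow S := ⟨t1, fun u hu => hu.1⟩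
    set T := sInf S with hTdef
    have hTS : T ∈ S := hScl.csInf_mem hSne hSbdd
    have hTt1 : t1 ≤ T := hTS.1
    have hTt0 : t0 ≤ T := le_trans ht1 hTt1
    have hTge : eps' ≤ ‖γ T - xe‖ := hTS.2
    have hdeleps : del ≤ eps' / 2 := min_le_left _ _
    have hinit' : ‖γ t1 - xe‖ < eps' / 2 := lt_of_lt_of_le hinit hdeleps
    have hT1 : t1 < T := by
      rcases lt_or_eq_of_le hTt1 with h | h
      · exact h
      · exfalso; rw [← h] at hTge; linarith
    have hless : ∀ u, t1 ≤ u → u < T → ‖γ u - xe‖ < eps' := by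
      intro u hu1 hu2
      by_contra hcc
      push_neg at hcc
      exact absurd (csInf_le hSbdd ⟨hu1, hcc⟩) (not_le.2 hu2)
    have hTle : ‖γ T - xe‖ ≤ eps' := by
      have hcl : T ∈ closure (Set.Ico t1 T) := by
        rw [closure_Ico (ne_of_lt hT1)]; exact ⟨le_of_lt hT1, le_refl T⟩
      haveI : (nhdsWithin T (Set.Ico t1 T)).NeBot := mem_closure_iff_nhdsWithin_neBot.mp hcl
      have htend : Filter.Tendsto (fun u => ‖γ u - xe‖) (nhdsWithin T (Set.Ico t1 T))
          (nhds ‖γ T - xe‖) :=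
        (hnormcont T hTt1).mono_left (nhdsWithin_mono T (fun u hu => hu.1))
      exact le_of_tendsto htend
        (Filter.eventually_of_mem self_mem_nhdsWithin (fun u hu => (hless u hu.1 hu.2).le))
    have hTnorm : ‖γ T - xe‖ = eps' := le_antisymm hTle hTge
    set V := fun u => H (u, γ u) with hVdef
    have hVcont : ContinuousOn V (Set.Icc t1 T) :=
      hH.continuous.comp_continuousOn
        (continuousOn_id.prodMk (hγcont.mono Set.Icc_subset_Ici_self))
    have hVD : ∀ u ∈ Set.Ioo t1 T,
        HasDerivAt V (fderiv ℝ H (u, γ u) (1, hamVF n k u (γ u))) u ∧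
          fderiv ℝ H (u, γ u) (1, hamVF n k u (γ u)) ≤ 0 := by
      intro u hu
      have hut1 : t1 ≤ u := le_of_lt hu.1
      have hut0 : t0 ≤ u := le_trans ht1 hut1
      have hxnear : ‖γ u - xe‖ < r0 := by
        have h := hless u hut1 hu.2
        linarith
      have hγ' : HasDerivAt γ (hamVF n k u (γ u)) u :=
        (hγ u hut1).hasDerivAt (Ici_mem_nhds hu.1)
      have hHd : HasFDerivAt H (fderiv ℝ H (u, γ u)) (u, γ u) :=
        (hH.differentiable (by simp) (u, γ u)).hasFDerivAt
      have hcurve : HasDerivAt (fun s => (s, γ s)) ((1:ℝ), hamVF n k u (γ u)) u :=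
        (hasDerivAt_id u).prodMk hγ'
      have hV1 : HasDerivAt V (fderiv ℝ H (u, γ u) (1, hamVF n k u (γ u))) u :=
        hHd.comp_hasDerivAt u hcurve
      refine ⟨hV1, ?_⟩
      set L := fderiv ℝ H (u, γ u) with hLdef
      set x := γ u with hxdef
      have hsplit : L ((1:ℝ), hamVF n k u x) = L (1, 0) + L (0, hamVF n k u x) := by
        rw [← map_add]
        congr 1
        rw [Prod.mk_add_mk, add_zero, zero_add]
      have hpar : HasDerivAt (fun s => H (s, x)) (L (1, 0)) u := by
        have hc2 : HasDerivAt (fun s : ℝ => (s, x))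
            ((1:ℝ), (0 : EuclideanSpace ℝ (Fin (2*n)))) u :=
          (hasDerivAt_id u).prodMk (hasDerivAt_const u x)
        exact hHd.comp_hasDerivAt u hc2
      have htime : L (1, 0) ≤ 0 := by
        rw [← hpar.deriv]; exact hdec u hut0 x hxnear
      have hspace : L (0, hamVF n k u x) = 0 := by
        have hy : HasFDerivAt (fun y => H (u, y))
            (L.comp ((0 : EuclideanSpace ℝ (Fin (2*n)) →L[ℝ] ℝ).prod
              (ContinuousLinearMap.id ℝ (EuclideanSpace ℝ (Fin (2*n)))))) x :=
          hHd.comp x ((hasFDerivAt_const u x).prodMk (hasFDerivAt_id x))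
        have happ : ∀ w : EuclideanSpace ℝ (Fin (2*n)),
            L (0, w) = ∑ i, w i * pd (fun y => H (u, y)) x i := by
          intro w
          have h1 : L (0, w) = (L.comp ((0 : EuclideanSpace ℝ (Fin (2*n)) →L[ℝ] ℝ).prod
              (ContinuousLinearMap.id ℝ (EuclideanSpace ℝ (Fin (2*n)))))) w := by simp
          rw [h1, clm_apply_eq_sum]
          refine Finset.sum_congr rfl fun i _ => ?_
          rw [pd, hy.fderiv]
        rw [happ]
        have hpdHk : ∀ i, pd (fun y => H (u, y)) x i = pd (fun y => k (u, y)) x i := by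
          intro i
          have he : (fun y => H (u, y)) = fun y => k (u, y) - k (u, xe) :=
            funext fun y => hHdef u y
          rw [pd, pd, he, fderiv_sub_const]
        have hsum2 : (∑ i, hamVF n k u x i * pd (fun y => H (u, y)) x i)
            = ∑ i, hamVF n k u x i * pd (fun y => k (u, y)) x i :=
          Finset.sum_congr rfl fun i _ => by rw [hpdHk]
        rw [hsum2]
        exact hamVF_dot n k u x
      rw [hsplit, hspace, add_zero]
      exact htime
    have hanti : AntitoneOn V (Set.Icc t1 T) := by
      apply antitoneOn_of_deriv_nonpos (convex_Icc _ _) hVcont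
      · intro u hu
        rw [interior_Icc] at hu
        exact ((hVD u hu).1.differentiableAt).differentiableWithinAt
      · intro u hu
        rw [interior_Icc] at hu
        rw [(hVD u hu).1.deriv]
        exact (hVD u hu).2
    have hVTle : V T ≤ V t1 :=
      hanti (Set.left_mem_Icc.2 hTt1) (Set.right_mem_Icc.2 hTt1) hTt1
    -- upper bound at t1
    have hup : V t1 ≤ K * ‖γ t1 - xe‖ ^ 2 := by
      have h := key_upper (fun x => H (t1, x)) (hft t1) xe (γ t1 - xe) c r0
        (hft0 t1) (hftcrit t1) (fun x hx i j => h2 t1 ht1 x hx i j)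
        (by linarith)
      rw [add_sub_cancel] at h
      exact h
    -- lower bound at T
    have hne : γ T - xe ≠ 0 := by
      intro h
      rw [h, norm_zero] at hTge
      linarith
    have hQ : 2 * (lam * ‖γ T - xe‖ ^ 2) ≤
        ∑ i, (γ T - xe) i * ∑ j, (γ T - xe) j * pd2 (fun x => H (T, x)) xe j i := by
      have hl := hlow T hTt0 (γ T - xe) hne
      have heq : (∑ i, (γ T - xe) i * ∑ j, (γ T - xe) j * pd2 (fun x => H (T, x)) xe j i) =
          2 * ∑ i, ∑ j, (γ T - xe) i * M T i j * (γ T - xe) j := by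
        calc (∑ i, (γ T - xe) i * ∑ j, (γ T - xe) j * pd2 (fun x => H (T, x)) xe j i)
            = ∑ i, ∑ j, (γ T - xe) i * ((γ T - xe) j * pd2 (fun x => H (T, x)) xe j i) := by
              simp_rw [Finset.mul_sum]
          _ = ∑ j, ∑ i, (γ T - xe) i * ((γ T - xe) j * pd2 (fun x => H (T, x)) xe j i) :=
              Finset.sum_comm
          _ = 2 * ∑ i, ∑ j, (γ T - xe) i * M T i j * (γ T - xe) j := by
              rw [Finset.mul_sum]
              refine Finset.sum_congr rfl fun a _ => ?_
              rw [Finset.mul_sum]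
              refine Finset.sum_congr rfl fun b _ => ?_
              rw [hM T a b]
              ring
      rw [heq]
      linarith
    have hTr0 : ‖γ T - xe‖ < r0 := by
      rw [hTnorm]; linarith
    have hsmall : 6 * c * ((2 * n : ℕ) : ℝ) ^ 3 * ‖γ T - xe‖ ^ 3 ≤ lam * ‖γ T - xe‖ ^ 2 := by
      have h1 : ‖γ T - xe‖ ≤ lam / C3 := by
        rw [hTnorm]; exact le_trans heps'r1 hr1a
      have h2' : C3 * ‖γ T - xe‖ ≤ lam := by
        have := (le_div_iff₀ hC3).mp h1
        linarith [mul_comm C3 ‖γ T - xe‖, this]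
      have h3' : 0 ≤ ‖γ T - xe‖ := norm_nonneg _
      calc 6 * c * ((2 * n : ℕ) : ℝ) ^ 3 * ‖γ T - xe‖ ^ 3
          = (C3 * ‖γ T - xe‖) * ‖γ T - xe‖ ^ 2 := by rw [hC3def]; ring
        _ ≤ lam * ‖γ T - xe‖ ^ 2 := by nlinarith
    have hlo := key_lower (fun x => H (T, x)) (hft T) xe (γ T - xe) lam c r0
      (hft0 T) (hftcrit T) (fun x hx i j l => h3 T hTt0 x hx i j l) hQ hTr0 hsmall
    rw [add_sub_cancel] at hlo
    -- contradiction
    have hdel2 : del ≤ eps' / 2 * Real.sqrt (lam / (4 * K)) := min_le_right _ _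
    have hsqrt : Real.sqrt (lam / (4 * K)) ^ 2 = lam / (4 * K) :=
      Real.sq_sqrt (by positivity)
    have hsq : del ^ 2 ≤ (eps' / 2) ^ 2 * (lam / (4 * K)) := by
      nlinarith [hdel.le, hdel2, Real.sqrt_nonneg (lam / (4 * K))]
    have hVt1 : V t1 ≤ K * del ^ 2 := by
      have h2' : ‖γ t1 - xe‖ ^ 2 ≤ del ^ 2 := by
        nlinarith [norm_nonneg (γ t1 - xe), hinit]
      nlinarith
    have hfinal : K * del ^ 2 ≤ lam * eps' ^ 2 / 16 := by
      have : K * del ^ 2 ≤ K * ((eps' / 2) ^ 2 * (lam / (4 * K))) := by nlinarith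
      calc K * del ^ 2 ≤ K * ((eps' / 2) ^ 2 * (lam / (4 * K))) := this
        _ = lam * eps' ^ 2 / 16 := by field_simp; ring
    rw [hTnorm] at hlo
    have hloV : lam * eps' ^ 2 / 2 ≤ V T := hlo
    have hpos : 0 < lam * eps' ^ 2 := by positivity
    linarith [hloV, hVTle, hVt1, hfinal, hpos]
  exact lt_of_lt_of_le (claim t ht) (min_le_left _ _)
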